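/- One IRN step does not increase the smoothed objective: if x_k minimizes F_k(x) = ||Ax−b||² + α² Σ_i (Dx)_i²/√((Dx_{k−1})_i²+τ²), then G̃(x) = ||Ax−b||² + α² Σ_i (2√((Dx)_i²+τ²) − ((Dx_{k−1})_i²+2τ²)/√((Dx_{k−1})_i²+τ²)) satisfies G̃(x_k) ≤ F_k(x_k) ≤ F_k(x_{k−1}) = G̃(x_{k−1}); hence the majorization-minimization step monotonically decreases the surrogate-corrected smoothed objective ||Ax−b||² + 2α²Φ_τ(Dx). -/

import Mathlib

open Matrix

theorem stmt_16 (N M P : ℕ) (A : Matrix (Fin N) (Fin M) ℝ) (D : Matrix (Fin P) (Fin M) ℝ)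
    (b : Fin N → ℝ) (α τ : ℝ) (hτ : 0 < τ) (xkm1 xk : Fin M → ℝ)
    (hmin : ∀ x : Fin M → ℝ,
      ∑ i, (A.mulVec xk i - b i) ^ 2
        + α ^ 2 * ∑ j, (D.mulVec xk j) ^ 2 / Real.sqrt ((D.mulVec xkm1 j) ^ 2 + τ ^ 2) ≤
      ∑ i, (A.mulVec x i - b i) ^ 2
        + α ^ 2 * ∑ j, (D.mulVec x j) ^ 2 / Real.sqrt ((D.mulVec xkm1 j) ^ 2 + τ ^ 2)) :
    ∑ i, (A.mulVec xk i - b i) ^ 2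
      + 2 * α ^ 2 * ∑ j, Real.sqrt ((D.mulVec xk j) ^ 2 + τ ^ 2) ≤
    ∑ i, (A.mulVec xkm1 i - b i) ^ 2
      + 2 * α ^ 2 * ∑ j, Real.sqrt ((D.mulVec xkm1 j) ^ 2 + τ ^ 2) := by
  have hmin' := hmin xkm1
  set v : Fin P → ℝ := fun j => Real.sqrt ((D.mulVec xkm1 j) ^ 2 + τ ^ 2) with hv
  have hvpos : ∀ j, 0 < v j := fun j => Real.sqrt_pos.2 (by positivity)
  have hvsq : ∀ j, v j ^ 2 = (D.mulVec xkm1 j) ^ 2 + τ ^ 2 :=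
    fun j => Real.sq_sqrt (by positivity)
  -- pointwise majorization: 2√(t²+τ²) ≤ t²/v + (s²+2τ²)/v
  have key : ∀ j, 2 * Real.sqrt ((D.mulVec xk j) ^ 2 + τ ^ 2) ≤
      (D.mulVec xk j) ^ 2 / v j + ((D.mulVec xkm1 j) ^ 2 + 2 * τ ^ 2) / v j := by
    intro j
    set t := D.mulVec xk j
    have hu : 0 ≤ (t : ℝ) ^ 2 + τ ^ 2 := by positivity
    have husq : Real.sqrt (t ^ 2 + τ ^ 2) ^ 2 = t ^ 2 + τ ^ 2 := Real.sq_sqrt hu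
    have hsq := sq_nonneg (Real.sqrt (t ^ 2 + τ ^ 2) - v j)
    have hmul : 2 * Real.sqrt (t ^ 2 + τ ^ 2) * v j ≤ t ^ 2 + (D.mulVec xkm1 j) ^ 2 + 2 * τ ^ 2 := by
      nlinarith [hvsq j]
    rw [← add_div, le_div_iff₀ (hvpos j)]
    linarith [hmul]
  -- sum of pointwise majorization
  have hA : 2 * ∑ j, Real.sqrt ((D.mulVec xk j) ^ 2 + τ ^ 2) ≤
      (∑ j, (D.mulVec xk j) ^ 2 / v j)
        + ∑ j, ((D.mulVec xkm1 j) ^ 2 + 2 * τ ^ 2) / v j := by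
    rw [Finset.mul_sum, ← Finset.sum_add_distrib]
    exact Finset.sum_le_sum fun j _ => key j
  -- equality at t = s
  have hB : (∑ j, (D.mulVec xkm1 j) ^ 2 / v j)
        + ∑ j, ((D.mulVec xkm1 j) ^ 2 + 2 * τ ^ 2) / v j
      = 2 * ∑ j, v j := by
    rw [← Finset.sum_add_distrib, Finset.mul_sum]
    refine Finset.sum_congr rfl fun j _ => ?_
    rw [← add_div, eq_comm, eq_div_iff (hvpos j).ne']
    nlinarith [hvsq j]
  have hα2 : (0 : ℝ) ≤ α ^ 2 := sq_nonneg α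
  have hA' : α ^ 2 * (2 * ∑ j, Real.sqrt ((D.mulVec xk j) ^ 2 + τ ^ 2)) ≤
      α ^ 2 * ((∑ j, (D.mulVec xk j) ^ 2 / v j)
        + ∑ j, ((D.mulVec xkm1 j) ^ 2 + 2 * τ ^ 2) / v j) :=
    mul_le_mul_of_nonneg_left hA hα2
  have hB' : α ^ 2 * ((∑ j, (D.mulVec xkm1 j) ^ 2 / v j)
        + ∑ j, ((D.mulVec xkm1 j) ^ 2 + 2 * τ ^ 2) / v j)
      = α ^ 2 * (2 * ∑ j, v j) := by rw [hB]
  nlinarith [hmin', hA', hB']
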